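/- arXiv:1503.00192 — 2 statements merged into one kernel-verified Lean document; each statement's English description precedes it below -/
import Mathlib

section
/- Let I_λ(F, G) = (1/2) ∬_{F×G} |x−y|^{−λ} dx dy for 0 < λ < d. If E has finite measure, G_n have uniformly bounded measure, and G_n → ∅ locally, then I_λ(E, G_n) → 0. -/
open MeasureTheory Filter Metric Set Topology
open scoped ENNReal NNReal

noncomputable section

/-- De Giorgi perimeter: the set of values `∫_E div F` over admissible vector fields. -/
def perSet (d : ℕ) (E : Set (EuclideanSpace ℝ (Fin d))) : Set ℝ :=
  {p | ∃ F : EuclideanSpace ℝ (Fin d) → EuclideanSpace ℝ (Fin d),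
      ContDiff ℝ 1 F ∧ HasCompactSupport F ∧ (∀ x, ‖F x‖ ≤ 1) ∧
      p = ∫ x in E, ∑ i, fderiv ℝ F x (EuclideanSpace.single i (1:ℝ)) i}

/-- De Giorgi perimeter of a measurable set. -/
def perimeter (d : ℕ) (E : Set (EuclideanSpace ℝ (Fin d))) : ℝ := sSup (perSet d E)

/-- A set has finite perimeter if the defining supremum is finite. -/
def FinitePerimeter (d : ℕ) (E : Set (EuclideanSpace ℝ (Fin d))) : Prop := BddAbove (perSet d E)

/-- Riesz interaction energy. -/
def riesz (d : ℕ) (l : ℝ) (A : Set (EuclideanSpace ℝ (Fin d))) : ℝ :=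
  (1/2) * ∫ x in A, ∫ y in A, ‖x - y‖ ^ (-l)

abbrev E3 := EuclideanSpace ℝ (Fin 3)

/-- Coulomb self-energy in dimension 3. -/
def coulomb (Ω : Set E3) : ℝ := (1/2) * ∫ x in Ω, ∫ y in Ω, ‖x - y‖⁻¹

/-- Liquid drop energy. -/
def ldEnergy (Ω : Set E3) : ℝ := perimeter 3 Ω + coulomb Ω

/-- Minimal liquid drop energy at mass `A`. -/
def ldE (A : ℝ) : ℝ :=
  sInf {e | ∃ Ω : Set E3, MeasurableSet Ω ∧ FinitePerimeter 3 Ω ∧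
      volume Ω = ENNReal.ofReal A ∧ e = ldEnergy Ω}


/-- Riesz interaction energy between two sets. -/
def riesz2 (d : ℕ) (l : ℝ) (A B : Set (EuclideanSpace ℝ (Fin d))) : ℝ :=
  (1/2) * ∫ x in A, ∫ y in B, ‖x - y‖ ^ (-l)

/-!
Write `φ(y) = ∫_E |x - y|^{-λ} dx`; by Tonelli, `I_λ(E, G) ≤ ∫_G φ`. Since `|z|^{-λ}` is locally
integrable for `λ < d`, splitting at `|x - y| = r` gives `φ ≤ ∫_{B_r} |z|^{-λ} + r^{-λ} |E|`, so `φ`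
is bounded. Splitting `E` further into `E ∩ B_S`, which is at distance `≥ t` from `y` once
`|y| > S + t`, and the tail `E \ B_S` of small measure shows `φ(y) → 0` as `|y| → ∞`. Then
`∫_{G_n} φ ≤ (sup φ) |G_n ∩ K| + (sup_{Kᶜ} φ) M` for every compact `K`: the first
term tends to `0`, and the second is small once `K` is a large ball.
-/

def rieszKernel {E : Type*} [Norm E] (l : ℝ) (z : E) : ℝ≥0∞ := ENNReal.ofReal (‖z‖ ^ (-l))

def rieszPotential {E : Type*} [NormedAddCommGroup E] [MeasurableSpace E] (μ : Measure E)
    (l : ℝ) (A : Set E) (y : E) : ℝ≥0∞ :=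
  ∫⁻ x in A, rieszKernel l (x - y) ∂μ

theorem ENNReal.tendsto_zero_of_limsup_le {α β : Type*} {u : α → ℝ≥0∞} {f : Filter α}
    {l : Filter β} [l.NeBot] {g : β → ℝ≥0∞} (hg : Tendsto g l (𝓝 0))
    (h : ∀ᶠ b in l, limsup u f ≤ g b) : Tendsto u f (𝓝 0) :=
  tendsto_of_le_liminf_of_limsup_le zero_le (ge_of_tendsto hg h)

theorem tendsto_measure_diff_closedBall_atTop {α : Type*} [PseudoMetricSpace α]
    [MeasurableSpace α] [OpensMeasurableSpace α] {μ : Measure α} {A : Set α}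
    (hA : NullMeasurableSet A μ) (hAfin : μ A ≠ ∞) (x : α) :
    Tendsto (fun R => μ (A \ closedBall x R)) atTop (𝓝 0) := by
  have hempty : ⋂ R : ℝ, A \ closedBall x R = ∅ := by
    refine eq_empty_of_forall_notMem fun y hy => ?_
    exact (mem_iInter.1 hy (dist y x)).2 (mem_closedBall.2 le_rfl)
  have h := tendsto_measure_iInter_atTop (μ := μ) (s := fun R : ℝ => A \ closedBall x R)
    (fun R => hA.diff measurableSet_closedBall.nullMeasurableSet)
    (fun R S hRS => sdiff_subset_sdiff_right (closedBall_subset_closedBall hRS))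
    ⟨0, ne_top_of_le_ne_top hAfin (measure_mono sdiff_subset)⟩
  rwa [hempty, measure_empty] at h

theorem tendsto_setLIntegral_zero_of_tendsto_cocompact {X : Type*} [TopologicalSpace X]
    [T2Space X] [MeasurableSpace X] [OpensMeasurableSpace X] {μ : Measure X} {φ : X → ℝ≥0∞}
    {C M : ℝ≥0∞} (hC : C ≠ ∞) (hφC : ∀ x, φ x ≤ C) (hφ : Tendsto φ (cocompact X) (𝓝 0))
    {G : ℕ → Set X} (hM : M ≠ ∞) (hGM : ∀ n, μ (G n) ≤ M)
    (hG : ∀ K, IsCompact K → Tendsto (fun n => μ (G n ∩ K)) atTop (𝓝 0)) :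
    Tendsto (fun n => ∫⁻ x in G n, φ x ∂μ) atTop (𝓝 0) := by
  have hlimsup : ∀ δ > 0, limsup (fun n => ∫⁻ x in G n, φ x ∂μ) atTop ≤ δ * M := by
    intro δ hδ
    obtain ⟨K, hK, hKφ⟩ := mem_cocompact.1 (hφ.eventually (ge_mem_nhds hδ))
    have hφK : ∀ x, φ x ≤ K.indicator (fun _ => C) x + δ := fun x => by
      by_cases hx : x ∈ K
      · simpa [hx] using le_add_right (hφC x)
      · simpa [hx] using hKφ hx
    have hbound : ∀ n, ∫⁻ x in G n, φ x ∂μ ≤ C * μ (G n ∩ K) + δ * M := fun n => calc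
      ∫⁻ x in G n, φ x ∂μ ≤ ∫⁻ x in G n, (K.indicator (fun _ => C) x + δ) ∂μ :=
          lintegral_mono hφK
      _ = C * μ (G n ∩ K) + δ * μ (G n) := by
          rw [lintegral_add_right _ measurable_const, lintegral_indicator_const hK.measurableSet,
            setLIntegral_const, Measure.restrict_apply hK.measurableSet, inter_comm]
      _ ≤ C * μ (G n ∩ K) + δ * M := by gcongr; exact hGM n
    have hlim : Tendsto (fun n => C * μ (G n ∩ K) + δ * M) atTop (𝓝 (δ * M)) := by
      simpa using (ENNReal.Tendsto.const_mul (hG K hK) (Or.inr hC)).add_const (δ * M)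
    exact (limsup_le_limsup (Eventually.of_forall hbound)).trans_eq hlim.limsup_eq
  refine ENNReal.tendsto_zero_of_limsup_le (l := atTop) (g := fun k : ℕ => (k : ℝ≥0∞)⁻¹ * M)
    ?_ (Eventually.of_forall fun k => hlimsup _ (ENNReal.inv_pos.2 (ENNReal.natCast_ne_top k)))
  simpa using ENNReal.Tendsto.mul_const ENNReal.tendsto_inv_nat_nhds_zero (Or.inr hM)

section RieszKernel

variable {E : Type*} [NormedAddCommGroup E] {l r : ℝ}

theorem rieszKernel_le_of_le_norm (hl : 0 ≤ l) (hr : 0 < r) {z : E} (h : r ≤ ‖z‖) :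
    rieszKernel l z ≤ ENNReal.ofReal (r ^ (-l)) :=
  ENNReal.ofReal_le_ofReal (Real.rpow_le_rpow_of_nonpos hr h (neg_nonpos.2 hl))

variable [MeasurableSpace E] {μ : Measure E} {A : Set E}

theorem rieszPotential_le_of_le_norm_sub (hl : 0 ≤ l) (hr : 0 < r) (hA : MeasurableSet A)
    {y : E} (h : ∀ x ∈ A, r ≤ ‖x - y‖) :
    rieszPotential μ l A y ≤ ENNReal.ofReal (r ^ (-l)) * μ A :=
  (setLIntegral_mono' hA fun x hx => rieszKernel_le_of_le_norm hl hr (h x hx)).trans_eq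
    (setLIntegral_const _ _)

variable [OpensMeasurableSpace E]

theorem measurable_rieszKernel (l : ℝ) : Measurable (rieszKernel l : E → ℝ≥0∞) :=
  (measurable_norm.pow_const _).ennreal_ofReal

theorem rieszPotential_closedBall_self [MeasurableAdd E] [μ.IsAddRightInvariant] (y : E) (r : ℝ) :
    rieszPotential μ l (closedBall y r) y = ∫⁻ z in closedBall 0 r, rieszKernel l z ∂μ := by
  rw [rieszPotential, ← lintegral_indicator measurableSet_closedBall,
    ← lintegral_indicator measurableSet_closedBall,
    ← lintegral_sub_right_eq_self ((closedBall 0 r).indicator (rieszKernel l)) y]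
  congr with x
  simp [indicator, mem_closedBall, dist_eq_norm]

theorem rieszPotential_le [MeasurableAdd E] [μ.IsAddRightInvariant] (hl : 0 ≤ l) (hr : 0 < r)
    (hA : MeasurableSet A) (y : E) :
    rieszPotential μ l A y ≤
      ∫⁻ z in closedBall 0 r, rieszKernel l z ∂μ + ENNReal.ofReal (r ^ (-l)) * μ A := by
  have hfar : rieszPotential μ l (A \ closedBall y r) y ≤ ENNReal.ofReal (r ^ (-l)) * μ A := by
    refine (rieszPotential_le_of_le_norm_sub hl hr (hA.diff measurableSet_closedBall)
      fun x hx => ?_).trans (by gcongr; exact sdiff_subset)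
    have hx' := hx.2
    rw [mem_closedBall, dist_eq_norm, not_le] at hx'
    exact hx'.le
  rw [← rieszPotential_closedBall_self y r, rieszPotential,
    ← lintegral_inter_add_sdiff _ A measurableSet_closedBall]
  exact add_le_add (lintegral_mono_set inter_subset_right) hfar

end RieszKernel

section FiniteDimensional

variable {E : Type*} [NormedAddCommGroup E] [NormedSpace ℝ E] [FiniteDimensional ℝ E]
  [MeasurableSpace E] [BorelSpace E] {μ : Measure E} [μ.IsAddHaarMeasure] {l : ℝ} {A : Set E}

theorem tendsto_lintegral_closedBall_rieszKernel (hd : 1 ≤ Module.finrank ℝ E)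
    (hld : l < Module.finrank ℝ E) :
    Tendsto (fun r => ∫⁻ z in closedBall 0 r, rieszKernel l z ∂μ) (𝓝[>] 0) (𝓝 0) := by
  have : Nontrivial E := Module.nontrivial_of_finrank_pos (R := ℝ) hd
  have hint : LocallyIntegrable (fun z : E => ‖z‖ ^ (-l)) μ :=
    locallyIntegrable_of_norm_le_rpow hd hld (C := 1)
      (ae_of_all _ fun z => by rw [one_mul, Real.norm_of_nonneg (by positivity)])
      (measurable_norm.pow_const _).aestronglyMeasurable
  set ν := μ.withDensity (rieszKernel l)
  have hν : ∀ r, ν (closedBall 0 r) = ∫⁻ z in closedBall 0 r, rieszKernel l z ∂μ :=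
    fun r => withDensity_apply _ measurableSet_closedBall
  have hfin : ν (cthickening 1 {0}) ≠ ∞ := by
    rw [cthickening_singleton _ zero_le_one, hν]
    exact ((hint.integrableOn_isCompact (isCompact_closedBall 0 1)).lintegral_lt_top).ne
  have hlim := (tendsto_measure_cthickening (μ := ν) ⟨1, one_pos, hfin⟩).mono_left
    (nhdsWithin_le_nhds (s := Ioi 0))
  rw [closure_singleton, withDensity_absolutelyContinuous μ _ (measure_singleton 0)] at hlim
  refine hlim.congr' (eventually_mem_nhdsWithin.mono fun r hr => ?_)
  rw [cthickening_singleton _ (le_of_lt hr), hν]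

theorem exists_rieszPotential_le (hd : 1 ≤ Module.finrank ℝ E) (hl : 0 ≤ l)
    (hld : l < Module.finrank ℝ E) (hA : MeasurableSet A) (hAfin : μ A ≠ ∞) :
    ∃ C ≠ ∞, ∀ y, rieszPotential μ l A y ≤ C := by
  obtain ⟨r, hr, hcr⟩ := (eventually_mem_nhdsWithin.and
    ((tendsto_lintegral_closedBall_rieszKernel (μ := μ) hd hld).eventually
      (gt_mem_nhds zero_lt_one))).exists
  exact ⟨_, ENNReal.add_ne_top.2 ⟨hcr.ne_top, ENNReal.mul_ne_top ENNReal.ofReal_ne_top hAfin⟩,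
    rieszPotential_le hl hr hA⟩

theorem tendsto_rieszPotential_cocompact (hd : 1 ≤ Module.finrank ℝ E) (hl : 0 < l)
    (hld : l < Module.finrank ℝ E) (hA : MeasurableSet A) (hAfin : μ A ≠ ∞) :
    Tendsto (rieszPotential μ l A) (cocompact E) (𝓝 0) := by
  set c := fun r => ∫⁻ z in closedBall 0 r, rieszKernel l z ∂μ
  set L := limsup (rieszPotential μ l A) (cocompact E)
  have hsplit : ∀ r > 0, ∀ S, ∀ t > 0, L ≤ c r +
      ENNReal.ofReal (r ^ (-l)) * μ (A \ closedBall 0 S) + ENNReal.ofReal (t ^ (-l)) * μ A := by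
    intro r hr S t ht
    refine limsup_le_of_le (by isBoundedDefault) ?_
    filter_upwards [tendsto_norm_cocompact_atTop.eventually_gt_atTop (S + t)] with y hy
    have hnear : rieszPotential μ l (A ∩ closedBall 0 S) y ≤ ENNReal.ofReal (t ^ (-l)) * μ A := by
      refine (rieszPotential_le_of_le_norm_sub hl.le ht (hA.inter measurableSet_closedBall)
        fun x hx => ?_).trans (by gcongr; exact inter_subset_left)
      have hxS : ‖x‖ ≤ S := mem_closedBall_zero_iff.1 hx.2
      linarith [norm_sub_norm_le y x, norm_sub_rev x y]
    have hfar := rieszPotential_le (μ := μ) hl.le hr (hA.diff (measurableSet_closedBall (x := 0) (ε := S))) y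
    rw [rieszPotential, ← lintegral_inter_add_sdiff _ A measurableSet_closedBall, add_comm]
    exact add_le_add hfar hnear
  have hdecay : Tendsto (fun t : ℝ => ENNReal.ofReal (t ^ (-l)) * μ A) atTop (𝓝 0) := by
    simpa using ENNReal.Tendsto.mul_const (ENNReal.tendsto_ofReal (tendsto_rpow_neg_atTop hl))
      (Or.inr hAfin)
  have htail : ∀ r, Tendsto (fun S : ℝ => ENNReal.ofReal (r ^ (-l)) * μ (A \ closedBall 0 S))
      atTop (𝓝 0) := fun r => by
    simpa using ENNReal.Tendsto.const_mul
      (tendsto_measure_diff_closedBall_atTop hA.nullMeasurableSet hAfin 0)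
      (Or.inr ENNReal.ofReal_ne_top)
  have hS : ∀ r > 0, ∀ S, L ≤ c r + ENNReal.ofReal (r ^ (-l)) * μ (A \ closedBall 0 S) :=
    fun r hr S => ge_of_tendsto (by simpa using tendsto_const_nhds.add hdecay)
      ((eventually_gt_atTop 0).mono (hsplit r hr S))
  have hr : ∀ r > 0, L ≤ c r := fun r hr =>
    ge_of_tendsto (by simpa using tendsto_const_nhds.add (htail r))
      (Eventually.of_forall (hS r hr))
  exact ENNReal.tendsto_zero_of_limsup_le (tendsto_lintegral_closedBall_rieszKernel hd hld)
    (eventually_mem_nhdsWithin.mono hr)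

end FiniteDimensional

theorem riesz2_nonneg (d : ℕ) (l : ℝ) (A B : Set (EuclideanSpace ℝ (Fin d))) :
    0 ≤ riesz2 d l A B :=
  mul_nonneg (by norm_num) (integral_nonneg fun _ => integral_nonneg fun _ => by positivity)

theorem ofReal_riesz2_le (d : ℕ) (l : ℝ) (A B : Set (EuclideanSpace ℝ (Fin d))) :
    ENNReal.ofReal (riesz2 d l A B) ≤ ∫⁻ y in B, rieszPotential volume l A y := by
  have hinner : ∀ x, ‖∫ y in B, ‖x - y‖ ^ (-l)‖ₑ ≤ ∫⁻ y in B, rieszKernel l (x - y) :=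
    fun x => (enorm_integral_le_lintegral_enorm _).trans_eq
      (lintegral_congr fun y => Real.enorm_of_nonneg (by positivity))
  calc ENNReal.ofReal (riesz2 d l A B)
      ≤ ‖∫ x in A, ∫ y in B, ‖x - y‖ ^ (-l)‖ₑ := by
        rw [riesz2, Real.enorm_eq_ofReal_abs]
        refine ENNReal.ofReal_le_ofReal ?_
        linarith [le_abs_self (∫ x in A, ∫ y in B, ‖x - y‖ ^ (-l)),
          abs_nonneg (∫ x in A, ∫ y in B, ‖x - y‖ ^ (-l))]
    _ ≤ ∫⁻ x in A, ∫⁻ y in B, rieszKernel l (x - y) :=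
        (enorm_integral_le_lintegral_enorm _).trans (lintegral_mono hinner)
    _ = ∫⁻ y in B, rieszPotential volume l A y :=
        lintegral_lintegral_swap
          ((measurable_rieszKernel l).comp (measurable_fst.sub measurable_snd)).aemeasurable

theorem riesz_interaction_tendsto_zero_general (d : ℕ) (hd : 0 < d) (l : ℝ) (hl : 0 < l) (hld : l < d)
    (E : Set (EuclideanSpace ℝ (Fin d))) (hEm : MeasurableSet E) (hEfin : volume E < ⊤)
    (G : ℕ → Set (EuclideanSpace ℝ (Fin d)))
    (M : ℝ≥0∞) (hM : M < ⊤) (hbd : ∀ n, volume (G n) ≤ M)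
    (hGconv : ∀ K : Set (EuclideanSpace ℝ (Fin d)), IsCompact K →
      Tendsto (fun n => volume (G n ∩ K)) atTop (𝓝 0)) :
    Tendsto (fun n => riesz2 d l E (G n)) atTop (𝓝 0) := by
  have hdim : Module.finrank ℝ (EuclideanSpace ℝ (Fin d)) = d := finrank_euclideanSpace_fin
  obtain ⟨C, hC, hpotC⟩ := exists_rieszPotential_le (μ := volume) (by omega) hl.le
    (by rwa [hdim]) hEm hEfin.ne
  have hpot := tendsto_rieszPotential_cocompact (μ := volume) (by omega) hl (by rwa [hdim])
    hEm hEfin.ne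
  have hlim := tendsto_setLIntegral_zero_of_tendsto_cocompact hC hpotC hpot hM.ne hbd hGconv
  have hofReal : Tendsto (fun n => ENNReal.ofReal (riesz2 d l E (G n))) atTop (𝓝 0) :=
    tendsto_of_tendsto_of_tendsto_of_le_of_le tendsto_const_nhds hlim (fun _ => zero_le)
      fun n => ofReal_riesz2_le d l E (G n)
  simpa [Function.comp_def, ENNReal.toReal_ofReal (riesz2_nonneg _ _ _ _)] using
    (ENNReal.tendsto_toReal ENNReal.zero_ne_top).comp hofReal

/-- the interaction between a fixed set and a locally vanishing sequence vanishes. -/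
theorem riesz_interaction_tendsto_zero (d : ℕ) (hd : 0 < d) (l : ℝ) (hl : 0 < l) (hld : l < d)
    (E : Set (EuclideanSpace ℝ (Fin d))) (hEm : MeasurableSet E) (hEfin : volume E < ⊤)
    (G : ℕ → Set (EuclideanSpace ℝ (Fin d))) (hGm : ∀ n, MeasurableSet (G n))
    (M : ℝ≥0∞) (hM : M < ⊤) (hbd : ∀ n, volume (G n) ≤ M)
    (hGconv : ∀ K : Set (EuclideanSpace ℝ (Fin d)), IsCompact K →
      Tendsto (fun n => volume (G n ∩ K)) atTop (𝓝 0)) :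
    Tendsto (fun n => riesz2 d l E (G n)) atTop (𝓝 0) :=
  riesz_interaction_tendsto_zero_general d hd l hl hld E hEm hEfin G M hM hbd hGconv
end
end

section
/- Let e^{(ball)}(a) = c_1 a^{−1/3} + c_2 a^{2/3} with constants c_1 = Per(B)/|B|^{2/3} > 0 and c_2 = D(B)/|B|^{5/3} > 0 (B the unit ball in R^3). Then for every A > 0 and every K ∈ N, inf{ Σ_{k=1}^K (A_k/A) e^{(ball)}(A_k) : A_k ≥ 0, Σ_{k=1}^K A_k = A } = min_{1 ≤ k ≤ K} e^{(ball)}(A/k), where terms with A_k = 0 are interpreted as 0. -/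
open MeasureTheory Filter Metric Set Topology

noncomputable section

/-- The unit ball in `ℝ³`. -/
def unitBall3 : Set E3 := ball (0 : E3) 1

/-- Binding energy per particle of a single ball of volume `a`. -/
def eBall (a : ℝ) : ℝ :=
  (perimeter 3 unitBall3 / (volume unitBall3).toReal ^ ((2:ℝ)/3)) * a ^ (-(1:ℝ)/3) +
    (coulomb unitBall3 / (volume unitBall3).toReal ^ ((5:ℝ)/3)) * a ^ ((2:ℝ)/3)

-- ===== auxiliary lemmas =====
set_option maxHeartbeats 1000000
lemma wfacts (w : ℝ) (hw : w^3 = 2) (hw0 : 0 < w) : 1 < w ∧ w < 2 ∧ w^2 < 2 := by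
  have hw1 : 1 < w := by
    have := lt_of_pow_lt_pow_left₀ 3 hw0.le (by rw [hw]; norm_num : (1:ℝ)^3 < w^3)
    simpa using this
  have hwlt : w < 2 := lt_of_pow_lt_pow_left₀ 3 (by norm_num) (by rw [hw]; norm_num)
  refine ⟨hw1, hwlt, ?_⟩
  nlinarith [mul_pos (mul_pos hw0 hw0) (sub_pos.mpr hw1)]

lemma crux (s t w : ℝ) (hs : 0 < s) (ht : 0 < t) (hst : s^3 + t^3 = 1)
    (hw : w^3 = 2) (hw0 : 0 < w) (hne : s ≠ t) :
    1 < (w^2-1)*(s^2+t^2) + (2-w^2)*(s^5+t^5) := by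
  obtain ⟨hw1, hwlt, hw2⟩ := wfacts w hw hw0
  have hq : 0 < s*t := mul_pos hs ht
  have hd : 0 < (s-t)^2 :=
    lt_of_le_of_ne (sq_nonneg _) (Ne.symm (pow_ne_zero 2 (sub_ne_zero_of_ne hne)))
  have hp0 : 0 < s + t := by linarith
  have hp1 : 1 < s + t := by nlinarith [mul_pos hq hp0]
  have hp3 : (s+t)^3 < 4 := by nlinarith [mul_pos hq hp0, mul_pos hd hp0]
  have h4 : (w^2)^3 = 4 := by
    have h : (w^2)^3 = (w^3)^2 := by ring
    rw [h, hw]; norm_num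
  have hpw : s + t < w^2 := lt_of_pow_lt_pow_left₀ 3 (sq_nonneg w) (by rw [h4]; exact hp3)
  have key : 9*(s+t)*((w^2-1)*(s^2+t^2) + (2-w^2)*(s^5+t^5) - 1)
      = (s+t-1)^2 * (w^2-(s+t)) *
        ((2-w^2)*(s+t)^3+(4-2*w)*(s+t)^2+(w^2+2)*(s+t)+(2*w+1)) := by
    linear_combination (4 + w^2 + 20*t^3 - 10*t^3*w^2 + 30*s*t^2 - 15*s*t^2*w^2 + 30*s^2*t
        - 15*s^2*t*w^2 + 20*s^3 - 10*s^3*w^2) * hst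
      + (-2 + 4*t - t*w + 2*t^2*w - 4*t^3 + 2*t^4 - 2*t^4*w + t^5*w + 4*s - s*w + 4*s*t*w
        - 12*s*t^2 + 8*s*t^3 - 8*s*t^3*w + 5*s*t^4*w + 2*s^2*w - 12*s^2*t + 12*s^2*t^2
        - 12*s^2*t^2*w + 10*s^2*t^3*w - 4*s^3 + 8*s^3*t - 8*s^3*t*w + 10*s^3*t^2*w + 2*s^4
        - 2*s^4*w + 5*s^4*t*w + s^5*w) * hw
  have hf1 : 0 < (s+t-1)^2 := pow_pos (by linarith) 2
  have hf2 : 0 < w^2 - (s+t) := by linarith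
  have hf3 : 0 < (2-w^2)*(s+t)^3+(4-2*w)*(s+t)^2+(w^2+2)*(s+t)+(2*w+1) := by
    have t1 : 0 < (2-w^2)*(s+t)^3 := mul_pos (by linarith) (pow_pos hp0 3)
    have t2 : 0 < (4-2*w)*(s+t)^2 := mul_pos (by linarith) (pow_pos hp0 2)
    have t3 : 0 < (w^2+2)*(s+t) := mul_pos (by positivity) hp0
    linarith
  have h10 : 0 < 9*(s+t)*((w^2-1)*(s^2+t^2)+(2-w^2)*(s^5+t^5) - 1) := by
    rw [key]; exact mul_pos (mul_pos hf1 hf2) hf3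
  nlinarith [h10, hp0]

/-- Power mean: s²+t² ≤ w where w = 2^{1/3}, given s³+t³ = 1. -/
lemma amw (s t w : ℝ) (hs : 0 < s) (ht : 0 < t) (hst : s^3 + t^3 = 1)
    (hw : w^3 = 2) (hw0 : 0 < w) : s^2 + t^2 ≤ w := by
  have hq : 0 < s*t := mul_pos hs ht
  have h1 : 0 ≤ (s+t)^4 - 2*(s+t)^2*(s*t) - 2*(s*t)^2 := by
    nlinarith [mul_nonneg (sq_nonneg (s+t)) (sq_nonneg (s-t)),
      mul_nonneg hq.le (by positivity : (0:ℝ) ≤ s^2+s*t+t^2)]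
  have hst2 : (s^3+t^3)^2 = 1 := by rw [hst]; norm_num
  have hcube : (s^2+t^2)^3 ≤ 2 := by
    nlinarith [mul_nonneg (sq_nonneg (s-t)) h1, hst2]
  have ha0 : (0:ℝ) ≤ s^2 + t^2 := by positivity
  exact le_of_pow_le_pow_left₀ (n := 3) (by norm_num) hw0.le (by rw [hw]; exact hcube)

lemma cone (d1 d2 a b w : ℝ) (hd1 : 0 ≤ d1) (hd2 : 0 ≤ d2) (hd : 0 < d1 ∨ 0 < d2)
    (hw : w^3 = 2) (hw0 : 0 < w) (hw1 : 1 < w) (hw2 : w^2 < 2)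
    (ha1 : 1 < a) (haw : a ≤ w)
    (hcrux : 1 < (w^2-1)*a + (2-w^2)*b) :
    min (d1 + d2) (d1*w + d2/w^2) < d1*a + d2*b := by
  by_contra hcon
  push_neg at hcon
  obtain ⟨h1, h2⟩ := le_min_iff.mp hcon
  have hw2pos : (0:ℝ) < w^2 := by positivity
  have h2' : d1*a*w^2 + d2*b*w^2 ≤ d1*w^3 + d2 := by
    have h := mul_le_mul_of_nonneg_right h2 hw2pos.le
    have hww : d2/w^2*w^2 = d2 := div_mul_cancel₀ d2 (ne_of_gt hw2pos)
    nlinarith [h]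
  have A1 : 0 ≤ d1*(a-1) := mul_nonneg hd1 (by linarith)
  have A2 : d1*(a-1) ≤ d2*(1-b) := by nlinarith [h1]
  have A3 : 0 ≤ d1*w^2*(w-a) := mul_nonneg (mul_nonneg hd1 hw2pos.le) (by linarith)
  have A4 : d2*(b*w^2-1) ≤ d1*w^2*(w-a) := by nlinarith [h2']
  have prod : d1*(a-1)*(d2*(b*w^2-1)) ≤ d2*(1-b)*(d1*w^2*(w-a)) := by
    nlinarith [mul_nonneg A3 (sub_nonneg.mpr A2), mul_nonneg A1 (sub_nonneg.mpr A4)]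
  have iden : d1*(a-1)*(d2*(b*w^2-1)) - d2*(1-b)*(d1*w^2*(w-a))
      = d1*d2*((w^2-1)*a + (2-w^2)*b - 1) := by
    linear_combination d1*d2*(b-1)*hw
  have hdd : d1*d2 ≤ 0 := by nlinarith [prod, iden, hcrux]
  have hdd0 : d1*d2 = 0 := le_antisymm hdd (mul_nonneg hd1 hd2)
  rcases mul_eq_zero.mp hdd0 with h0 | h0
  · -- d1 = 0, so d2 > 0
    have hd2' : 0 < d2 := by
      rcases hd with h | h
      · exact absurd h (by rw [h0]; exact lt_irrefl 0)
      · exact h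
    rw [h0] at h2' h1
    have hbw : b*w^2 ≤ 1 := by nlinarith [h2', hd2']
    have hw21 : 1 < w^2 := by nlinarith
    have hc2 : w - 1 < (2-w^2)*b := by
      nlinarith [mul_le_mul_of_nonneg_left haw (by linarith : (0:ℝ) ≤ w^2-1)]
    have hc3 : (w-1)*w^2 < (2-w^2)*b*w^2 := by
      have := mul_lt_mul_of_pos_right hc2 hw2pos
      linarith
    nlinarith [hc3, mul_le_mul_of_nonneg_left hbw (by linarith : (0:ℝ) ≤ 2-w^2)]
  · -- d2 = 0, so d1 > 0
    have hd1' : 0 < d1 := by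
      rcases hd with h | h
      · exact h
      · exact absurd h (by rw [h0]; exact lt_irrefl 0)
    rw [h0] at h1
    nlinarith [mul_pos hd1' (sub_pos.mpr ha1)]

noncomputable def gfun (c1 c2 a : ℝ) : ℝ := c1 * a ^ ((2:ℝ)/3) + c2 * a ^ ((5:ℝ)/3)

lemma third_pow_n (u : ℝ) (hu : 0 ≤ u) (n : ℕ) :
    (u ^ ((1:ℝ)/3)) ^ n = u ^ ((n:ℝ)/3) := by
  rw [← Real.rpow_natCast (u ^ ((1:ℝ)/3)) n, ← Real.rpow_mul hu]
  congr 1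
  ring





lemma one_lt_sqsum (s t : ℝ) (hs : 0 < s) (ht : 0 < t) (hs1 : s < 1) (ht1 : t < 1)
    (hst : s^3 + t^3 = 1) : 1 < s^2 + t^2 := by
  nlinarith [mul_pos (mul_pos hs hs) (sub_pos.mpr hs1), mul_pos (mul_pos ht ht) (sub_pos.mpr ht1)]

lemma pair (c1 c2 x y : ℝ) (hc1 : 0 ≤ c1) (hc2 : 0 ≤ c2) (hc : 0 < c1 ∨ 0 < c2)
    (hx : 0 < x) (hy : 0 < y) (hne : x ≠ y) :
    min (gfun c1 c2 (x+y)) (2 * gfun c1 c2 ((x+y)/2)) < gfun c1 c2 x + gfun c1 c2 y := by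
  set σ : ℝ := x + y with hσdef
  have hσ : 0 < σ := by positivity
  set w : ℝ := (2:ℝ) ^ ((1:ℝ)/3) with hwdef
  have hw0 : 0 < w := Real.rpow_pos_of_pos two_pos _
  have hw3 : w ^ 3 = 2 := by
    rw [hwdef, third_pow_n 2 (by norm_num) 3, show ((3:ℕ):ℝ)/3 = 1 by norm_num, Real.rpow_one]
  obtain ⟨hw1, hwlt, hw2⟩ := wfacts w hw3 hw0
  set s : ℝ := (x/σ) ^ ((1:ℝ)/3) with hsdef
  set t : ℝ := (y/σ) ^ ((1:ℝ)/3) with htdef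
  have hxσ : (0:ℝ) ≤ x/σ := by positivity
  have hyσ : (0:ℝ) ≤ y/σ := by positivity
  have hs : 0 < s := Real.rpow_pos_of_pos (div_pos hx hσ) _
  have ht : 0 < t := Real.rpow_pos_of_pos (div_pos hy hσ) _
  have hs3 : s ^ 3 = x/σ := by
    rw [hsdef, third_pow_n _ hxσ 3, show ((3:ℕ):ℝ)/3 = 1 by norm_num, Real.rpow_one]
  have ht3 : t ^ 3 = y/σ := by
    rw [htdef, third_pow_n _ hyσ 3, show ((3:ℕ):ℝ)/3 = 1 by norm_num, Real.rpow_one]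
  have hst : s^3 + t^3 = 1 := by rw [hs3, ht3]; field_simp; linarith
  have hnest : s ≠ t := by
    intro h
    apply hne
    have h3 : s^3 = t^3 := by rw [h]
    rw [hs3, ht3, div_eq_div_iff hσ.ne' hσ.ne'] at h3
    exact mul_right_cancel₀ hσ.ne' h3
  -- pieces
  have hs2 : s^2 = (x/σ) ^ ((2:ℝ)/3) := by
    rw [hsdef, third_pow_n _ hxσ 2]; norm_num
  have hs5 : s^5 = (x/σ) ^ ((5:ℝ)/3) := by
    rw [hsdef, third_pow_n _ hxσ 5]; norm_num
  have ht2 : t^2 = (y/σ) ^ ((2:ℝ)/3) := by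
    rw [htdef, third_pow_n _ hyσ 2]; norm_num
  have ht5 : t^5 = (y/σ) ^ ((5:ℝ)/3) := by
    rw [htdef, third_pow_n _ hyσ 5]; norm_num
  have hx23 : x ^ ((2:ℝ)/3) = σ ^ ((2:ℝ)/3) * s^2 := by
    rw [hs2, ← Real.mul_rpow hσ.le hxσ]
    congr 1
    field_simp
  have hx53 : x ^ ((5:ℝ)/3) = σ ^ ((5:ℝ)/3) * s^5 := by
    rw [hs5, ← Real.mul_rpow hσ.le hxσ]
    congr 1
    field_simp
  have hy23 : y ^ ((2:ℝ)/3) = σ ^ ((2:ℝ)/3) * t^2 := by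
    rw [ht2, ← Real.mul_rpow hσ.le hyσ]
    congr 1
    field_simp
  have hy53 : y ^ ((5:ℝ)/3) = σ ^ ((5:ℝ)/3) * t^5 := by
    rw [ht5, ← Real.mul_rpow hσ.le hyσ]
    congr 1
    field_simp
  -- halving
  have hw2eq : w^2 = (2:ℝ) ^ ((2:ℝ)/3) := by
    rw [hwdef, third_pow_n 2 (by norm_num) 2]; norm_num
  have h23 : (2:ℝ)^((1:ℝ)/3) * (2:ℝ)^((2:ℝ)/3) = 2 := by
    rw [← Real.rpow_add two_pos]; norm_num
  have h53 : (2:ℝ)^((5:ℝ)/3) = 2 * (2:ℝ)^((2:ℝ)/3) := by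
    rw [show (5:ℝ)/3 = 1 + 2/3 by norm_num, Real.rpow_add two_pos, Real.rpow_one]
  have hA2 : (0:ℝ) < (2:ℝ)^((2:ℝ)/3) := Real.rpow_pos_of_pos two_pos _
  have hA5 : (0:ℝ) < (2:ℝ)^((5:ℝ)/3) := Real.rpow_pos_of_pos two_pos _
  have hhalf2 : (2:ℝ) * (σ/2) ^ ((2:ℝ)/3) = σ ^ ((2:ℝ)/3) * w := by
    rw [Real.div_rpow hσ.le (by norm_num), hwdef]
    field_simp
    linear_combination (-1:ℝ) * h23
  have hhalf5 : (2:ℝ) * (σ/2) ^ ((5:ℝ)/3) = σ ^ ((5:ℝ)/3) / w^2 := by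
    rw [Real.div_rpow hσ.le (by norm_num), hw2eq]
    field_simp
    linear_combination (-1:ℝ) * h53
  -- assemble
  set d1 : ℝ := c1 * σ ^ ((2:ℝ)/3) with hd1def
  set d2 : ℝ := c2 * σ ^ ((5:ℝ)/3) with hd2def
  have hd1 : 0 ≤ d1 := mul_nonneg hc1 (Real.rpow_nonneg hσ.le _)
  have hd2 : 0 ≤ d2 := mul_nonneg hc2 (Real.rpow_nonneg hσ.le _)
  have hd : 0 < d1 ∨ 0 < d2 := by
    rcases hc with h | h
    · exact Or.inl (mul_pos h (Real.rpow_pos_of_pos hσ _))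
    · exact Or.inr (mul_pos h (Real.rpow_pos_of_pos hσ _))
  have ha1 : 1 < s^2 + t^2 := by
    have hs1 : s < 1 := by
      have h1 : s^3 < 1^3 := by
        rw [hs3, one_pow, div_lt_one hσ, hσdef]; linarith
      exact lt_of_pow_lt_pow_left₀ 3 zero_le_one h1
    have ht1 : t < 1 := by
      have h1 : t^3 < 1^3 := by
        rw [ht3, one_pow, div_lt_one hσ, hσdef]; linarith
      exact lt_of_pow_lt_pow_left₀ 3 zero_le_one h1
    exact one_lt_sqsum s t hs ht hs1 ht1 hst
  have haw : s^2 + t^2 ≤ w := amw s t w hs ht hst hw3 hw0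
  have hcx : 1 < (w^2-1)*(s^2+t^2) + (2-w^2)*(s^5+t^5) :=
    crux s t w hs ht hst hw3 hw0 hnest
  have hcone := cone d1 d2 (s^2+t^2) (s^5+t^5) w hd1 hd2 hd hw3 hw0 hw1 hw2 ha1 haw hcx
  -- translate back
  have e1 : gfun c1 c2 x + gfun c1 c2 y = d1*(s^2+t^2) + d2*(s^5+t^5) := by
    simp only [gfun, hx23, hx53, hy23, hy53, hd1def, hd2def]
    ring
  have e2 : gfun c1 c2 σ = d1 + d2 := by simp only [gfun, hd1def, hd2def]
  have e3 : 2 * gfun c1 c2 (σ/2) = d1*w + d2/w^2 := by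
    simp only [gfun, hd1def, hd2def]
    rw [mul_add, ← mul_assoc, ← mul_assoc, mul_comm (2:ℝ) c1, mul_comm (2:ℝ) c2,
      mul_assoc c1, mul_assoc c2, hhalf2, hhalf5]
    ring
  rw [e1, e2, e3]
  exact hcone

lemma gfun_zero (c1 c2 : ℝ) : gfun c1 c2 0 = 0 := by
  simp [gfun, Real.zero_rpow (by norm_num : ((2:ℝ)/3) ≠ 0),
    Real.zero_rpow (by norm_num : ((5:ℝ)/3) ≠ 0)]

lemma gfun_continuous (c1 c2 : ℝ) : Continuous (gfun c1 c2) := by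
  have h1 : Continuous fun x : ℝ => x ^ ((2:ℝ)/3) := by
    rw [continuous_iff_continuousAt]
    intro x
    exact Real.continuousAt_rpow_const x _ (Or.inr (by norm_num))
  have h2 : Continuous fun x : ℝ => x ^ ((5:ℝ)/3) := by
    rw [continuous_iff_continuousAt]
    intro x
    exact Real.continuousAt_rpow_const x _ (Or.inr (by norm_num))
  exact (continuous_const.mul h1).add (continuous_const.mul h2)

lemma sum_update_one {K : ℕ} (g : Fin K → ℝ) (f : ℝ → ℝ) (m : Fin K) (w : ℝ) :
    ∑ k, f (Function.update g m w k) = ∑ k, f (g k) - f (g m) + f w := by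
  classical
  have h : (fun k => f (Function.update g m w k)) = Function.update (fun k => f (g k)) m (f w) := by
    funext k
    by_cases h : k = m
    · subst h; simp
    · simp [Function.update_apply, h]
  rw [h, Finset.sum_update_of_mem (Finset.mem_univ m)]
  have h2 : ∑ k ∈ Finset.univ.erase m, f (g k) + f (g m) = ∑ k, f (g k) :=
    Finset.sum_erase_add _ _ (Finset.mem_univ m)
  rw [Finset.sdiff_singleton_eq_erase]
  linarith

lemma sum_update_two {K : ℕ} (p : Fin K → ℝ) (f : ℝ → ℝ) {i j : Fin K} (hij : i ≠ j) (u v : ℝ) :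
    ∑ k, f (Function.update (Function.update p i u) j v k)
      = ∑ k, f (p k) - f (p i) - f (p j) + f u + f v := by
  rw [sum_update_one, sum_update_one]
  rw [Function.update_of_ne hij.symm]
  ring

/-- Main combinatorial lemma: the minimum of the splitting energy is an equal split. -/
lemma gmain (c1 c2 : ℝ) (hc1 : 0 ≤ c1) (hc2 : 0 ≤ c2) (A : ℝ) (hA : 0 < A) (K : ℕ) (hK : 0 < K) :
    ∃ n : ℕ, 1 ≤ n ∧ n ≤ K ∧ ∀ a : Fin K → ℝ, (∀ k, 0 ≤ a k) → ∑ k, a k = A →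
      (n:ℝ) * gfun c1 c2 (A/n) ≤ ∑ k, gfun c1 c2 (a k) := by
  classical
  by_cases hc : 0 < c1 ∨ 0 < c2
  swap
  · -- degenerate case
    push_neg at hc
    have hc1' : c1 = 0 := le_antisymm hc.1 hc1
    have hc2' : c2 = 0 := le_antisymm hc.2 hc2
    refine ⟨1, le_refl 1, hK, fun a ha hsum => ?_⟩
    simp [gfun, hc1', hc2']
  -- minimizer exists
  set G : (Fin K → ℝ) → ℝ := fun a => ∑ k, gfun c1 c2 (a k) with hGdef
  set Sset : Set (Fin K → ℝ) := {a | (∀ k, 0 ≤ a k) ∧ ∑ k, a k = A} with hSdef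
  have hKR : (0:ℝ) < K := by exact_mod_cast hK
  have hSne : Sset.Nonempty := by
    refine ⟨fun _ => A/K, fun k => by positivity, ?_⟩
    rw [Finset.sum_const, Finset.card_univ, Fintype.card_fin, nsmul_eq_mul]
    field_simp
  have hSsub : Sset ⊆ Set.Icc (0 : Fin K → ℝ) (fun _ => A) := by
    rintro a ⟨ha0, hsum⟩
    refine ⟨fun k => ha0 k, fun k => ?_⟩
    calc a k ≤ ∑ m, a m := Finset.single_le_sum (fun m _ => ha0 m) (Finset.mem_univ k)
    _ = A := hsum
  have hSclosed : IsClosed Sset := by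
    have h1 : IsClosed {a : Fin K → ℝ | ∀ k, 0 ≤ a k} := by
      have : {a : Fin K → ℝ | ∀ k, 0 ≤ a k} = ⋂ k, (fun a : Fin K → ℝ => a k) ⁻¹' (Set.Ici 0) := by
        ext a; simp [Set.mem_iInter]
      rw [this]
      exact isClosed_iInter fun k => isClosed_Ici.preimage (continuous_apply k)
    have h2 : IsClosed {a : Fin K → ℝ | ∑ k, a k = A} :=
      isClosed_eq (continuous_finset_sum _ fun k _ => continuous_apply k) continuous_const
    exact h1.inter h2
  have hScompact : IsCompact Sset := (isCompact_Icc).of_isClosed_subset hSclosed hSsub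
  have hGcont : Continuous G :=
    continuous_finset_sum _ fun k _ => (gfun_continuous c1 c2).comp (continuous_apply k)
  obtain ⟨p, hpS, hpmin⟩ := hScompact.exists_isMinOn hSne hGcont.continuousOn
  rw [isMinOn_iff] at hpmin
  obtain ⟨hp0, hpsum⟩ := hpS
  -- all positive coordinates are equal
  have key : ∀ i j : Fin K, i ≠ j → 0 < p i → 0 < p j → p i = p j := by
    intro i j hij hpi hpj
    by_contra hne
    have hpair := pair c1 c2 (p i) (p j) hc1 hc2 hc hpi hpj hne
    rcases le_total (gfun c1 c2 (p i + p j)) (2 * gfun c1 c2 ((p i + p j)/2)) with hle | hle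
    · -- merge: replace by (p i + p j, 0)
      set q : Fin K → ℝ := Function.update (Function.update p i (p i + p j)) j 0 with hqdef
      have hqS : q ∈ Sset := by
        constructor
        · intro k
          rw [hqdef, Function.update_apply, Function.update_apply]
          split_ifs <;> first | exact le_refl 0 | positivity | exact hp0 k
        · have hs := sum_update_two p (fun x => x) hij (p i + p j) 0
          rw [hqdef, hs]
          linarith
      have hval : G q < G p := by
        rw [hGdef]
        simp only
        rw [hqdef, sum_update_two p (gfun c1 c2) hij, gfun_zero]
        rw [min_eq_left hle] at hpair
        linarith
      exact absurd (hpmin q hqS) (not_le.mpr hval)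
    · -- equalize
      set q : Fin K → ℝ := Function.update (Function.update p i ((p i + p j)/2)) j ((p i + p j)/2) with hqdef
      have hqS : q ∈ Sset := by
        constructor
        · intro k
          rw [hqdef, Function.update_apply, Function.update_apply]
          split_ifs <;> first | positivity | exact hp0 k
        · have hs := sum_update_two p (fun x => x) hij ((p i + p j)/2) ((p i + p j)/2)
          rw [hqdef, hs]
          linarith
      have hval : G q < G p := by
        rw [hGdef]
        simp only
        rw [hqdef, sum_update_two p (gfun c1 c2) hij]
        rw [min_eq_right hle] at hpair
        linarith
      exact absurd (hpmin q hqS) (not_le.mpr hval)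
  -- support
  have hex : ∃ k, 0 < p k := by
    by_contra h
    push_neg at h
    have : ∀ k, p k = 0 := fun k => le_antisymm (h k) (hp0 k)
    rw [Finset.sum_congr rfl (fun k _ => this k), Finset.sum_const, smul_zero] at hpsum
    exact absurd hpsum (by linarith)
  obtain ⟨k0, hk0⟩ := hex
  set P : Finset (Fin K) := Finset.univ.filter (fun k => 0 < p k) with hPdef
  have hk0P : k0 ∈ P := by rw [hPdef]; simp [hk0]
  set n : ℕ := P.card with hndef
  have hn1 : 1 ≤ n := Finset.card_pos.mpr ⟨k0, hk0P⟩
  have hnK : n ≤ K := by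
    calc n ≤ Finset.univ.card := Finset.card_filter_le _ _
    _ = K := by rw [Finset.card_univ, Fintype.card_fin]
  have hnR : (0:ℝ) < n := by exact_mod_cast hn1
  have hconst : ∀ k ∈ P, p k = p k0 := by
    intro k hk
    rw [hPdef] at hk
    simp only [Finset.mem_filter] at hk
    by_cases hkk : k = k0
    · rw [hkk]
    · exact key k k0 hkk hk.2 hk0
  have hoff : ∀ k ∈ Finset.univ \ P, p k = 0 := by
    intro k hk
    rw [hPdef] at hk
    simp only [Finset.mem_sdiff, Finset.mem_filter, Finset.mem_univ, true_and, not_lt] at hk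
    exact le_antisymm hk (hp0 k)
  have hsumP : ∑ k ∈ P, p k = A := by
    rw [← hpsum]
    apply Finset.sum_subset (Finset.subset_univ P)
    intro k _ hk
    exact hoff k (Finset.mem_sdiff.mpr ⟨Finset.mem_univ k, hk⟩)
  have hpk0 : p k0 = A / n := by
    have : ∑ k ∈ P, p k = n * p k0 := by
      rw [Finset.sum_congr rfl hconst, Finset.sum_const, nsmul_eq_mul]
    rw [this] at hsumP
    field_simp
    linarith [hsumP]
  have hGp : G p = n * gfun c1 c2 (A/n) := by
    rw [hGdef]
    simp only
    rw [← Finset.sum_subset (Finset.subset_univ P) (fun k _ hk => by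
      rw [hoff k (Finset.mem_sdiff.mpr ⟨Finset.mem_univ k, hk⟩), gfun_zero])]
    rw [Finset.sum_congr rfl (fun k hk => by rw [hconst k hk, hpk0]), Finset.sum_const, nsmul_eq_mul]
  refine ⟨n, hn1, hnK, fun a ha hsum => ?_⟩
  rw [← hGp]
  exact hpmin a ⟨ha, hsum⟩

lemma zero_mem_perSet (d : ℕ) (E : Set (EuclideanSpace ℝ (Fin d))) : (0:ℝ) ∈ perSet d E := by
  refine ⟨fun _ => 0, contDiff_const, ?_, fun x => by simp, ?_⟩
  · have : Function.support (fun _ : EuclideanSpace ℝ (Fin d) => (0 : EuclideanSpace ℝ (Fin d))) = ∅ := by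
      simp [Function.support]
    rw [HasCompactSupport, tsupport, this, closure_empty]
    exact isCompact_empty
  · simp [fderiv_const]

lemma perimeter_nonneg (d : ℕ) (E : Set (EuclideanSpace ℝ (Fin d))) : 0 ≤ perimeter d E := by
  by_cases h : BddAbove (perSet d E)
  · exact le_csSup h (zero_mem_perSet d E)
  · rw [perimeter, Real.sSup_of_not_bddAbove h]

lemma coulomb_nonneg (Ω : Set E3) : 0 ≤ coulomb Ω := by
  apply mul_nonneg (by norm_num)
  apply integral_nonneg
  intro x
  apply integral_nonneg
  intro y
  positivity

lemma psi (c1 c2 A : ℝ) (hA : 0 < A) (a : ℝ) (ha : 0 ≤ a) :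
    (a/A) * (c1 * a ^ (-(1:ℝ)/3) + c2 * a ^ ((2:ℝ)/3)) = gfun c1 c2 a / A := by
  rcases eq_or_lt_of_le ha with h | h
  · rw [← h]
    rw [gfun_zero]
    simp [Real.zero_rpow (by norm_num : (-(1:ℝ)/3) ≠ 0),
      Real.zero_rpow (by norm_num : ((2:ℝ)/3) ≠ 0)]
  · have h1 : a * a ^ (-(1:ℝ)/3) = a ^ ((2:ℝ)/3) := by
      nth_rewrite 1 [← Real.rpow_one a]
      rw [← Real.rpow_add h]
      norm_num
    have h2 : a * a ^ ((2:ℝ)/3) = a ^ ((5:ℝ)/3) := by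
      nth_rewrite 1 [← Real.rpow_one a]
      rw [← Real.rpow_add h]
      norm_num
    have e : (a/A) * (c1 * a ^ (-(1:ℝ)/3) + c2 * a ^ ((2:ℝ)/3))
        = (c1 * (a * a ^ (-(1:ℝ)/3)) + c2 * (a * a ^ ((2:ℝ)/3)))/A := by ring
    rw [e, h1, h2]
    rfl

lemma sum_indicator (K c : ℕ) (hcK : c ≤ K) (r : ℝ) :
    ∑ m : Fin K, (if (m:ℕ) < c then r else 0) = c * r := by
  classical
  rw [Fin.sum_univ_eq_sum_range (fun i => if i < c then r else 0) K]
  rw [Finset.sum_ite, Finset.sum_const_zero, add_zero, Finset.sum_const]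
  have h : (Finset.range K).filter (fun i => i < c) = Finset.range c := by
    ext m
    simp only [Finset.mem_filter, Finset.mem_range]
    omega
  rw [h, Finset.card_range, nsmul_eq_mul]

/-- the optimal dissociation of mass `A` into at most `K` balls
is into `k` equal balls for some `k ≤ K`. -/
theorem dissociation_into_balls (A : ℝ) (hA : 0 < A) (K : ℕ) (hK : 0 < K) :
    sInf {s | ∃ a : Fin K → ℝ, (∀ k, 0 ≤ a k) ∧ (∑ k, a k) = A ∧
        s = ∑ k, (a k / A) * eBall (a k)} =
      sInf {s | ∃ k : Fin K, s = eBall (A / ((k : ℕ) + 1))} := by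
  classical
  set c1 : ℝ := perimeter 3 unitBall3 / (volume unitBall3).toReal ^ ((2:ℝ)/3) with hc1def
  set c2 : ℝ := coulomb unitBall3 / (volume unitBall3).toReal ^ ((5:ℝ)/3) with hc2def
  have hc1 : 0 ≤ c1 := div_nonneg (perimeter_nonneg 3 unitBall3)
    (Real.rpow_nonneg ENNReal.toReal_nonneg _)
  have hc2 : 0 ≤ c2 := div_nonneg (coulomb_nonneg unitBall3)
    (Real.rpow_nonneg ENNReal.toReal_nonneg _)
  have heB : ∀ a : ℝ, eBall a = c1 * a ^ (-(1:ℝ)/3) + c2 * a ^ ((2:ℝ)/3) := fun a => rfl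
  set S1 : Set ℝ := {s | ∃ a : Fin K → ℝ, (∀ k, 0 ≤ a k) ∧ (∑ k, a k) = A ∧
      s = ∑ k, (a k / A) * eBall (a k)} with hS1def
  set S2 : Set ℝ := {s | ∃ k : Fin K, s = eBall (A / ((k : ℕ) + 1))} with hS2def
  -- value of any admissible config
  have hval : ∀ a : Fin K → ℝ, (∀ k, 0 ≤ a k) →
      ∑ k, (a k / A) * eBall (a k) = (∑ k, gfun c1 c2 (a k)) / A := by
    intro a ha
    rw [Finset.sum_div]
    apply Finset.sum_congr rfl
    intro k _
    rw [heB]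
    exact psi c1 c2 A hA (a k) (ha k)
  -- eBall at equal splits
  have heq : ∀ n : ℕ, 1 ≤ n → eBall (A/n) = (n:ℝ) * gfun c1 c2 (A/n) / A := by
    intro n hn
    have hnR : (0:ℝ) < n := by exact_mod_cast hn
    have hx : (0:ℝ) < A/n := by positivity
    have hp := psi c1 c2 A hA (A/n) hx.le
    rw [← heB] at hp
    have hq : A/(n:ℝ)/A = 1/n := by field_simp <;> ring
    rw [hq] at hp
    field_simp at hp ⊢
    linarith [hp, mul_comm A (n:ℝ)]
  -- equal split configurations are admissible
  have hmemS1 : ∀ k : Fin K, eBall (A / ((k : ℕ) + 1)) ∈ S1 := by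
    intro k
    set c : ℕ := (k:ℕ) + 1 with hcdef
    have hcK : c ≤ K := k.isLt
    have hcR : (0:ℝ) < c := by positivity
    have hcast : ((k:ℕ):ℝ) + 1 = (c:ℝ) := by rw [hcdef]; push_cast; ring
    refine ⟨fun m => if (m:ℕ) < c then A/c else 0, fun m => ?_, ?_, ?_⟩
    · dsimp only
      split_ifs
      · positivity
      · exact le_refl 0
    · dsimp only
      rw [sum_indicator K c hcK]
      field_simp
    · have hg : ∀ m : Fin K, (((if (m:ℕ) < c then A/c else 0) / A) *
          eBall (if (m:ℕ) < c then A/c else 0))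
          = if (m:ℕ) < c then (A/c/A) * eBall (A/c) else 0 := by
        intro m
        split_ifs
        · rfl
        · simp
      dsimp only
      rw [Finset.sum_congr rfl (fun m _ => hg m), sum_indicator K c hcK]
      have h1 : (A/(c:ℝ))/A = 1/c := by field_simp <;> ring
      rw [h1, hcast]
      field_simp
  -- the minimizer of G
  obtain ⟨n, hn1, hnK, hmin⟩ := gmain c1 c2 hc1 hc2 A hA K hK
  have hnR : (0:ℝ) < n := by exact_mod_cast hn1
  -- lower bound for S1
  have hbound : ∀ s ∈ S1, eBall (A/n) ≤ s := by
    rintro s ⟨a, ha0, hsum, hs⟩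
    rw [hs, hval a ha0, heq n hn1]
    gcongr
    exact hmin a ha0 hsum
  have hS1ne : S1.Nonempty := ⟨_, hmemS1 ⟨0, hK⟩⟩
  have hS2ne : S2.Nonempty := ⟨_, ⟨(⟨0, hK⟩ : Fin K), rfl⟩⟩
  have hS1bdd : BddBelow S1 := ⟨eBall (A/n), fun s hs => hbound s hs⟩
  have hS2bdd : BddBelow S2 := by
    have hfin : S2.Finite := by
      apply (Set.finite_range (fun k : Fin K => eBall (A / ((k:ℕ) + 1)))).subset
      rintro s ⟨k, hk⟩
      exact ⟨k, hk.symm⟩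
    exact hfin.bddBelow
  have hS2mem : eBall (A/n) ∈ S2 := by
    refine ⟨⟨n-1, by omega⟩, ?_⟩
    congr 1
    have hcast : ((n-1:ℕ):ℝ) = (n:ℝ) - 1 := by
      rw [Nat.cast_sub hn1]
      norm_num
    show A / (n:ℝ) = A / (((n-1:ℕ):ℝ) + 1)
    rw [hcast]
    ring_nf
  apply le_antisymm
  · apply le_csInf hS2ne
    rintro s ⟨k, hk⟩
    rw [hk]
    exact csInf_le hS1bdd (hmemS1 k)
  · apply le_csInf hS1ne
    intro s hs
    exact le_trans (csInf_le hS2bdd hS2mem) (hbound s hs)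
end
end
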